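/- Fix real parameters k₁, k₂, k₃, q with k₂ = −k₃. Let J(x,y,z) be the 3×3 skew-symmetric matrix with J₁₂ = 0, J₁₃ = 0, J₂₃ = −x/2, and let R(x,y,z) be the symmetric matrix with diagonal (k₁, k₂, k₃) and off-diagonal entries R₁₂ = −q, R₁₃ = −y, R₂₃ = x/2 (the Poisson and resistance matrices of the Rabinovich system). Then the skew-symmetric matrix N = JR + RJ, identified with the vector field N(x,y,z) = (N₃₂, N₁₃, N₂₁), satisfies the Jacobi identity N·(∇×N) = 0 at every point of ℝ³. -/
import Mathlib


set_option linter.unusedVariables false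

open Matrix

/-- Partial derivative with respect to the first variable. -/
noncomputable def pd1 (f : ℝ → ℝ → ℝ → ℝ) (x y z : ℝ) : ℝ := deriv (fun t => f t y z) x
/-- Partial derivative with respect to the second variable. -/
noncomputable def pd2 (f : ℝ → ℝ → ℝ → ℝ) (x y z : ℝ) : ℝ := deriv (fun t => f x t z) y
/-- Partial derivative with respect to the third variable. -/
noncomputable def pd3 (f : ℝ → ℝ → ℝ → ℝ) (x y z : ℝ) : ℝ := deriv (fun t => f x y t) z

/-- Poisson matrix of the Rabinovich system. -/
noncomputable def Jmat (x y z : ℝ) : Matrix (Fin 3) (Fin 3) ℝ :=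
  !![0, 0, 0; 0, 0, -x/2; 0, x/2, 0]

/-- Resistance matrix of the Rabinovich system. -/
noncomputable def Rmat (k₁ k₂ k₃ q : ℝ) (x y z : ℝ) : Matrix (Fin 3) (Fin 3) ℝ :=
  !![k₁, -q, -y; -q, k₂, x/2; -y, x/2, k₃]

/-- `N = JR + RJ`. -/
noncomputable def Nmat (k₁ k₂ k₃ q : ℝ) (x y z : ℝ) : Matrix (Fin 3) (Fin 3) ℝ :=
  Jmat x y z * Rmat k₁ k₂ k₃ q x y z + Rmat k₁ k₂ k₃ q x y z * Jmat x y z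

/-- First component of the vector field associated to `N`: `N₃₂`. -/
noncomputable def N1 (k₁ k₂ k₃ q : ℝ) (x y z : ℝ) : ℝ := Nmat k₁ k₂ k₃ q x y z 2 1
/-- Second component: `N₁₃`. -/
noncomputable def N2 (k₁ k₂ k₃ q : ℝ) (x y z : ℝ) : ℝ := Nmat k₁ k₂ k₃ q x y z 0 2
/-- Third component: `N₂₁`. -/
noncomputable def N3 (k₁ k₂ k₃ q : ℝ) (x y z : ℝ) : ℝ := Nmat k₁ k₂ k₃ q x y z 1 0


lemma N1_eq (k₁ k₂ k₃ q x y z : ℝ) : N1 k₁ k₂ k₃ q x y z = (k₂ + k₃) * x / 2 := by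
  simp [N1, Nmat, Jmat, Rmat, Matrix.mul_apply, Fin.sum_univ_three]; ring

lemma N2_eq (k₁ k₂ k₃ q x y z : ℝ) : N2 k₁ k₂ k₃ q x y z = q * x / 2 := by
  simp [N2, Nmat, Jmat, Rmat, Matrix.mul_apply, Fin.sum_univ_three]; ring

lemma N3_eq (k₁ k₂ k₃ q x y z : ℝ) : N3 k₁ k₂ k₃ q x y z = x * y / 2 := by
  simp [N3, Nmat, Jmat, Rmat, Matrix.mul_apply, Fin.sum_univ_three]; ring

/-- For the Rabinovich system with `k₂ = −k₃`, the higher-degree matrix `N = JR + RJ`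
satisfies the Jacobi identity `N·(∇×N) = 0` at every point of `ℝ³`. -/
theorem stmt_2 (k₁ k₂ k₃ q : ℝ) (hk : k₂ = -k₃) (x y z : ℝ) :
    N1 k₁ k₂ k₃ q x y z * (pd2 (N3 k₁ k₂ k₃ q) x y z - pd3 (N2 k₁ k₂ k₃ q) x y z)
      + N2 k₁ k₂ k₃ q x y z * (pd3 (N1 k₁ k₂ k₃ q) x y z - pd1 (N3 k₁ k₂ k₃ q) x y z)
      + N3 k₁ k₂ k₃ q x y z * (pd1 (N2 k₁ k₂ k₃ q) x y z - pd2 (N1 k₁ k₂ k₃ q) x y z) = 0 := by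
  have h1 : ∀ a b c : ℝ, N1 k₁ k₂ k₃ q a b c = (k₂ + k₃) * a / 2 := fun a b c => N1_eq ..
  have h2 : ∀ a b c : ℝ, N2 k₁ k₂ k₃ q a b c = q * a / 2 := fun a b c => N2_eq ..
  have h3 : ∀ a b c : ℝ, N3 k₁ k₂ k₃ q a b c = a * b / 2 := fun a b c => N3_eq ..
  have e1 : N1 k₁ k₂ k₃ q = fun a b c => (k₂ + k₃) * a / 2 := by funext a b c; exact h1 a b c
  have e2 : N2 k₁ k₂ k₃ q = fun a b c => q * a / 2 := by funext a b c; exact h2 a b c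
  have e3 : N3 k₁ k₂ k₃ q = fun a b c => a * b / 2 := by funext a b c; exact h3 a b c
  subst hk
  rw [e1, e2, e3]
  simp only [pd1, pd2, pd3]
  have hd : ∀ a b : ℝ, deriv (HMul.hMul a) b = a := by
    intro a b; simpa using deriv_const_mul a (differentiableAt_id' (x := b))
  norm_num [deriv_div_const, deriv_const_mul_field', mul_comm, hd]
  ring
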